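/- Let Ω ⊆ ℝ^D be compact with Lebesgue measure 1 and let g : ℝ^D → ℝ be nonnegative and integrable on Ω. If p : ℝ^D → ℝ is 1-Lipschitz on Ω, nonnegative on Ω, and satisfies ∫_Ω p dx = 1 (i.e., p ∈ V̂), then ∫_Ω g(x) p(x) dx ≤ (diam(Ω) + 1) · ∫_Ω g(x) dx. In particular, the supremum over p ∈ V̂ of ∫_Ω r²(x;θ) p(x) dx is bounded by M · ∫_Ω r²(x;θ) dx with the explicit constant M = diam(Ω) + 1. -/

import Mathlib

/-! A `1`-Lipschitz function on `Ω` differs from its mean over `Ω` by at most `diam Ω`, and the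
mean of a probability density on a set of measure one is `1`; hence `p ≤ diam Ω + 1` on `Ω`, and
the bound follows by integrating `g * p ≤ (diam Ω + 1) * g`. -/

open MeasureTheory

theorem LipschitzOnWith.le_setIntegral_add_mul_diam {α : Type*} [PseudoMetricSpace α]
    [MeasurableSpace α] {μ : Measure α} {s : Set α} {K : NNReal} {f : α → ℝ}
    (hf : LipschitzOnWith K f s) (hfi : IntegrableOn f s μ) (hs : MeasurableSet s)
    (hs_bdd : Bornology.IsBounded s) (hμs : μ s = 1) {x : α} (hx : x ∈ s) :
    f x ≤ ∫ y in s, f y ∂μ + K * Metric.diam s := by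
  have h_mean : ∫ _ in s, (f x - K * Metric.diam s) ∂μ = f x - K * Metric.diam s := by
    simp [Measure.real, hμs]
  have h_pointwise : ∀ y ∈ s, f x - K * Metric.diam s ≤ f y := fun y hy => by
    have h_dist : dist (f x) (f y) ≤ K * Metric.diam s :=
      (hf.dist_le_mul x hx y hy).trans <| by
        gcongr; exact Metric.dist_le_diam_of_mem hs_bdd hx hy
    rw [Real.dist_eq] at h_dist
    linarith [le_abs_self (f x - f y)]
  have := setIntegral_mono_on (integrableOn_const (by simp [hμs])) hfi hs h_pointwise
  linarith

theorem weighted_integral_bound_general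
    (D : ℕ)
    (Ω : Set (EuclideanSpace ℝ (Fin D)))
    (hΩc : IsCompact Ω) (hΩvol : volume Ω = 1)
    (g p : EuclideanSpace ℝ (Fin D) → ℝ)
    (hg_nonneg : ∀ x ∈ Ω, 0 ≤ g x)
    (hg_int : IntegrableOn g Ω volume)
    (hp_lip : ∀ x ∈ Ω, ∀ y ∈ Ω, |p x - p y| ≤ ‖x - y‖)
    (hp_int : ∫ x in Ω, p x = 1) :
    ∫ x in Ω, g x * p x ≤ (Metric.diam Ω + 1) * ∫ x in Ω, g x := by
  have hΩm : MeasurableSet Ω := hΩc.isClosed.measurableSet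
  have hp_lip' : LipschitzOnWith 1 p Ω := .of_dist_le_mul fun x hx y hy => by
    simpa [Real.dist_eq, dist_eq_norm] using hp_lip x hx y hy
  have hp_cont := hp_lip'.continuousOn
  have hp_le : ∀ x ∈ Ω, p x ≤ Metric.diam Ω + 1 := fun x hx => by
    have := hp_lip'.le_setIntegral_add_mul_diam (hp_cont.integrableOn_compact hΩc) hΩm
      hΩc.isBounded hΩvol hx
    rw [hp_int] at this
    simpa [add_comm] using this
  calc ∫ x in Ω, g x * p x ≤ ∫ x in Ω, (Metric.diam Ω + 1) * g x :=
        setIntegral_mono_on (hg_int.mul_continuousOn hp_cont hΩc) (hg_int.const_mul _) hΩm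
          fun x hx => by
            rw [mul_comm]
            exact mul_le_mul_of_nonneg_right (hp_le x hx) (hg_nonneg x hx)
    _ = (Metric.diam Ω + 1) * ∫ x in Ω, g x := integral_const_mul _ _

/-- For a nonnegative integrable `g` on a compact `Ω` of measure one, the integral of
`g` weighted by any `1`-Lipschitz probability density `p` on `Ω` is bounded by
`(diam Ω + 1) ∫_Ω g`. -/
theorem weighted_integral_bound
    (D : ℕ) (hD : 0 < D)
    (Ω : Set (EuclideanSpace ℝ (Fin D)))
    (hΩc : IsCompact Ω) (hΩvol : volume Ω = 1)
    (g p : EuclideanSpace ℝ (Fin D) → ℝ)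
    (hg_nonneg : ∀ x ∈ Ω, 0 ≤ g x)
    (hg_int : IntegrableOn g Ω volume)
    (hp_lip : ∀ x ∈ Ω, ∀ y ∈ Ω, |p x - p y| ≤ ‖x - y‖)
    (hp_nonneg : ∀ x ∈ Ω, 0 ≤ p x)
    (hp_int : ∫ x in Ω, p x = 1) :
    ∫ x in Ω, g x * p x ≤ (Metric.diam Ω + 1) * ∫ x in Ω, g x :=
  weighted_integral_bound_general D Ω hΩc hΩvol g p hg_nonneg hg_int hp_lip hp_int
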